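/- The vector space L consisting of all vector fields of the form c Θ^0_0 + d F^{−1}_0 + Σ_{k≥1, −1≤l≤k} a^l_k F^l_k + Σ_{n≥1, 0≤m≤n} b^m_n Θ^m_n (with real coefficients c, d, a^l_k, b^m_n; note that F^0_0 is excluded) is closed under the Lie bracket of vector fields, and hence is a Lie algebra. -/

import Mathlib

/-!
Write `ρ = y² + z²`. Then `2 F^{a-1}_{a-1+b} = x^{a-1} ρ^b ((2b+2) x∂_x - a (y∂_y + z∂_z))` for
`a ≥ 1`, `2 F^{-1}_{b-1} = (2b+2) ρ^b ∂_x`, and `Θ^m_{m+ν} = x^m ρ^ν (z∂_y - y∂_z)`. The fields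
`x∂_x`, `y∂_y + z∂_z`, `z∂_y - y∂_z` commute pairwise and act on `x^e ρ^f` by the scalars `e`, `2f`,
`0`, so expanding `[p u, q v] = p q [u, v] + p u(q) v - q v(p) u` shows that the bracket of two
generators is an integer multiple of one generator, the indices `(a, b)` adding up to
`(a + a' - 1, b + b')`. The weight `a + 2b` of the result is then at least `3`, so the excluded
fields `F^{-1}_{-1}` and `F^0_0` (weights `0` and `1`) never occur, and bilinearity extends the
closure from the generators to their span.
-/

noncomputable section
open MvPolynomial

/-- Polynomial functions of the variables x, y, z (indexed `0, 1, 2`). -/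
abbrev Poly3 := MvPolynomial (Fin 3) ℝ

/-- Polynomial vector fields on ℝ³, given by their three components. -/
abbrev VF3 := Fin 3 → Poly3

/-- The derivation action `v(g) = v₁ ∂g/∂x + v₂ ∂g/∂y + v₃ ∂g/∂z`. -/
def applyVF (v : VF3) (g : Poly3) : Poly3 := ∑ i, v i * pderiv i g

/-- The Lie bracket `[v,w] := v∘w − w∘v`, with i-th component `v(wᵢ) − w(vᵢ)`. -/
def bracket (v w : VF3) : VF3 := fun i => applyVF v (w i) - applyVF w (v i)

/-- The divergence `div v = ∂v₁/∂x + ∂v₂/∂y + ∂v₃/∂z`. -/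
def divergence (v : VF3) : Poly3 := ∑ i, pderiv i (v i)

/-- The vector field `F^l_k := x^l (y²+z²)^{k−l} ((k−l+1) x ∂_x − ((l+1)/2) y ∂_y − ((l+1)/2) z ∂_z)`
for integers `−1 ≤ l ≤ k`; for `l = −1` the second and third components vanish and this is
`(k+2)(y²+z²)^{k+1} ∂_x`. -/
def Fvf (l k : ℤ) : VF3 :=
  ![C ((k - l + 1 : ℤ) : ℝ) * X 0 ^ (l + 1).toNat * (X 1 ^ 2 + X 2 ^ 2) ^ (k - l).toNat,
    C (-((l + 1 : ℤ) : ℝ) / 2) * X 0 ^ l.toNat * X 1 * (X 1 ^ 2 + X 2 ^ 2) ^ (k - l).toNat,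
    C (-((l + 1 : ℤ) : ℝ) / 2) * X 0 ^ l.toNat * X 2 * (X 1 ^ 2 + X 2 ^ 2) ^ (k - l).toNat]

/-- The vector field `Θ^m_n := x^m (y²+z²)^{n−m} (z ∂_y − y ∂_z)` for integers `0 ≤ m ≤ n`. -/
def Tvf (m n : ℤ) : VF3 :=
  ![0,
    X 0 ^ m.toNat * (X 1 ^ 2 + X 2 ^ 2) ^ (n - m).toNat * X 2,
    -(X 0 ^ m.toNat * (X 1 ^ 2 + X 2 ^ 2) ^ (n - m).toNat * X 1)]

/-- The generating set of the space `L`: `Θ^0_0`, `F^{−1}_0`, the `F^l_k` with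
`k ≥ 1, −1 ≤ l ≤ k`, and the `Θ^m_n` with `n ≥ 1, 0 ≤ m ≤ n` (so `F^0_0` is excluded). -/
def Lset : Set VF3 :=
  {v | v = Tvf 0 0 ∨ v = Fvf (-1) 0 ∨
    (∃ l k : ℤ, 1 ≤ k ∧ -1 ≤ l ∧ l ≤ k ∧ v = Fvf l k) ∨
    ∃ m n : ℤ, 1 ≤ n ∧ 0 ≤ m ∧ m ≤ n ∧ v = Tvf m n}

lemma applyVF_add_left (u v : VF3) (g : Poly3) :
    applyVF (u + v) g = applyVF u g + applyVF v g := by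
  simp only [applyVF, Pi.add_apply, add_mul, Finset.sum_add_distrib]

lemma applyVF_smul_left {S : Type*} [Monoid S] [DistribMulAction S Poly3]
    [IsScalarTower S Poly3 Poly3] (s : S) (v : VF3) (g : Poly3) :
    applyVF (s • v) g = s • applyVF v g := by
  simp only [applyVF, Pi.smul_apply, smul_mul_assoc, Finset.smul_sum]

lemma applyVF_add (v : VF3) (g h : Poly3) :
    applyVF v (g + h) = applyVF v g + applyVF v h := by
  simp only [applyVF, map_add, mul_add, Finset.sum_add_distrib]

lemma applyVF_smul (r : ℝ) (v : VF3) (g : Poly3) :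
    applyVF v (r • g) = r • applyVF v g := by
  simp only [applyVF, Derivation.map_smul, mul_smul_comm, Finset.smul_sum]

lemma applyVF_mul (v : VF3) (g h : Poly3) :
    applyVF v (g * h) = applyVF v g * h + g * applyVF v h := by
  simp only [applyVF, Derivation.leibniz, smul_eq_mul, Fin.sum_univ_three]
  ring

lemma applyVF_pow_of_eq_mul {v : VF3} {g c : Poly3} (h : applyVF v g = c * g) (n : ℕ) :
    applyVF v (g ^ n) = n * c * g ^ n := by
  induction n with
  | zero => simp [applyVF]
  | succ n ih => rw [pow_succ, applyVF_mul, ih, h]; push_cast; ring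

lemma applyVF_natCast (v : VF3) (n : ℕ) : applyVF v n = 0 := by
  simp [applyVF]

lemma applyVF_ofNat (v : VF3) (n : ℕ) [n.AtLeastTwo] :
    applyVF v (no_index (OfNat.ofNat n)) = 0 := by
  rw [← Nat.cast_ofNat]; exact applyVF_natCast v _

lemma applyVF_X (v : VF3) (i : Fin 3) : applyVF v (X i) = v i := by
  simp [applyVF, pderiv_X, Pi.single_apply]

lemma bracket_swap (v w : VF3) : bracket w v = -bracket v w := by
  funext i; simp only [bracket, Pi.neg_apply, neg_sub]

lemma bracket_self (v : VF3) : bracket v v = 0 := by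
  funext i; exact sub_self _

lemma bracket_add_left (u v w : VF3) : bracket (u + v) w = bracket u w + bracket v w := by
  funext i; simp only [bracket, Pi.add_apply, applyVF_add_left, applyVF_add]; ring

lemma bracket_smul_left (r : ℝ) (v w : VF3) : bracket (r • v) w = r • bracket v w := by
  funext i; simp only [bracket, Pi.smul_apply, applyVF_smul_left, applyVF_smul, smul_sub]

lemma bracket_smul_smul (p q : Poly3) (u v : VF3) :
    bracket (p • u) (q • v) =
      (p * q) • bracket u v + (p * applyVF u q) • v - (q * applyVF v p) • u := by
  funext i
  simp only [bracket, Pi.add_apply, Pi.sub_apply, Pi.smul_apply, smul_eq_mul, applyVF_smul_left,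
    applyVF_mul]
  ring

def bracketₗ : VF3 →ₗ[ℝ] VF3 →ₗ[ℝ] VF3 :=
  LinearMap.mk₂ ℝ bracket bracket_add_left bracket_smul_left
    (fun u v w => by
      rw [bracket_swap, bracket_add_left, bracket_swap u, bracket_swap u, neg_add, neg_neg, neg_neg])
    (fun r v w => by rw [bracket_swap, bracket_smul_left, bracket_swap v, smul_neg, neg_neg])

lemma bracket_mem_span_of_forall_mem {s : Set VF3}
    (hs : ∀ v ∈ s, ∀ w ∈ s, bracket v w ∈ Submodule.span ℝ s) :
    ∀ v ∈ Submodule.span ℝ s, ∀ w ∈ Submodule.span ℝ s, bracket v w ∈ Submodule.span ℝ s := by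
  intro v hv w hw
  have h := Submodule.apply_mem_map₂ bracketₗ hv hw
  rw [Submodule.map₂_span_span] at h
  refine Submodule.span_le.2 ?_ h
  rintro _ ⟨v, hv, w, hw, rfl⟩
  exact hs v hv w hw

def rho : Poly3 := X 1 ^ 2 + X 2 ^ 2

lemma applyVF_rho (v : VF3) : applyVF v rho = 2 * (X 1 * v 1 + X 2 * v 2) := by
  simp only [rho, applyVF_add, pow_two, applyVF_mul, applyVF_X]; ring

def partialX : VF3 := ![1, 0, 0]

/-- Stated as a multiple of `partialX`, so that `module` sees `x ∂_x` and `∂_x` as proportional. -/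
def eulerX : VF3 := (X 0 : Poly3) • partialX

def eulerYZ : VF3 := ![0, X 1, X 2]

def eulerComb (α β : ℤ) : VF3 := α • eulerX + β • eulerYZ

def rotYZ : VF3 := ![0, X 2, -X 1]

lemma applyVF_partialX_X_zero_pow_succ (n : ℕ) :
    applyVF partialX (X 0 ^ (n + 1)) = (n + 1 : Poly3) * X 0 ^ n := by
  simp [applyVF, partialX, Fin.sum_univ_three, pderiv_X]

lemma applyVF_partialX_rho : applyVF partialX rho = 0 * rho := by
  simp [applyVF_rho, partialX]

lemma applyVF_eulerComb_X_zero (α β : ℤ) :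
    applyVF (eulerComb α β) (X 0) = (α : Poly3) * X 0 := by
  simp [applyVF_X, eulerComb, eulerX, eulerYZ, partialX]

lemma applyVF_eulerComb_rho (α β : ℤ) :
    applyVF (eulerComb α β) rho = (2 * β : Poly3) * rho := by
  rw [applyVF_rho]; simp [eulerComb, eulerX, eulerYZ, partialX, rho]; ring

lemma applyVF_rotYZ_X_zero : applyVF rotYZ (X 0) = 0 * X 0 := by
  simp [applyVF_X, rotYZ]

lemma applyVF_rotYZ_rho : applyVF rotYZ rho = 0 * rho := by
  simp [applyVF_rho, rotYZ]; ring

lemma bracket_partialX_eulerComb (α β : ℤ) :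
    bracket partialX (eulerComb α β) = α • partialX := by
  funext i
  fin_cases i <;>
    simp [bracket, applyVF, partialX, eulerComb, eulerX, eulerYZ, Fin.sum_univ_three, pderiv_X]

lemma bracket_eulerComb_eulerComb (α β α' β' : ℤ) :
    bracket (eulerComb α β) (eulerComb α' β') = 0 := by
  funext i
  fin_cases i <;>
    simp [bracket, applyVF, partialX, eulerComb, eulerX, eulerYZ, Fin.sum_univ_three, pderiv_X] <;>
    ring

lemma bracket_partialX_rotYZ : bracket partialX rotYZ = 0 := by
  funext i; fin_cases i <;> simp [bracket, applyVF, partialX, rotYZ, Fin.sum_univ_three, pderiv_X]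

lemma bracket_eulerComb_rotYZ (α β : ℤ) : bracket (eulerComb α β) rotYZ = 0 := by
  funext i
  fin_cases i <;>
    simp [bracket, applyVF, partialX, eulerComb, eulerX, eulerYZ, rotYZ, Fin.sum_univ_three,
      pderiv_X] <;>
    ring

/-- `fieldF a b = 2 F^{a-1}_{a-1+b}` and `fieldΘ m ν = Θ^m_{m+ν}`. -/
def fieldF : ℕ → ℕ → VF3
  | 0, b => ((2 * b + 2 : Poly3) * rho ^ b) • partialX
  | a + 1, b => (X 0 ^ a * rho ^ b) • eulerComb (2 * b + 2) (-(a + 1))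

def fieldΘ (m ν : ℕ) : VF3 := (X 0 ^ m * rho ^ ν) • rotYZ

lemma bracket_fieldF_succ_fieldF_succ (a b a' b' : ℕ) :
    bracket (fieldF (a + 1) b) (fieldF (a' + 1) b') =
      (2 * ((a' + 1) * (b + 1) - (a + 1) * (b' + 1)) : ℤ) • fieldF (a + a' + 1) (b + b') := by
  simp only [fieldF, bracket_smul_smul, bracket_eulerComb_eulerComb, applyVF_mul,
    applyVF_pow_of_eq_mul (applyVF_eulerComb_X_zero _ _),
    applyVF_pow_of_eq_mul (applyVF_eulerComb_rho _ _)]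
  simp only [eulerComb, eulerX]
  push_cast
  module

lemma bracket_fieldF_zero_fieldF_zero (b b' : ℕ) :
    bracket (fieldF 0 b) (fieldF 0 b') = 0 := by
  simp only [fieldF, bracket_smul_smul, bracket_self, applyVF_mul, applyVF_natCast, applyVF_ofNat,
    applyVF_add, applyVF_pow_of_eq_mul applyVF_partialX_rho]
  module

lemma bracket_fieldF_zero_fieldF_succ (b a' b' : ℕ) :
    bracket (fieldF 0 b) (fieldF (a' + 1) b') =
      (2 * (a' + 1) * (b + 1) : ℤ) • fieldF a' (b + b') := by
  rcases a' with _ | a' <;>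
    simp only [fieldF, bracket_smul_smul, bracket_partialX_eulerComb, applyVF_mul, applyVF_natCast,
      applyVF_ofNat, applyVF_add, pow_zero, one_mul, applyVF_partialX_X_zero_pow_succ,
      applyVF_pow_of_eq_mul applyVF_partialX_rho,
      applyVF_pow_of_eq_mul (applyVF_eulerComb_rho _ _)] <;>
    simp only [eulerComb, eulerX] <;>
    push_cast <;>
    module

/-- For `a = a' = 0` the index `a + a' - 1` is truncated, but then the coefficient vanishes. -/
lemma bracket_fieldF_fieldF (a b a' b' : ℕ) :
    bracket (fieldF a b) (fieldF a' b') =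
      (2 * (a' * (b + 1) - a * (b' + 1)) : ℤ) • fieldF (a + a' - 1) (b + b') := by
  rcases a with _ | a <;> rcases a' with _ | a'
  · simp [bracket_fieldF_zero_fieldF_zero]
  · rw [bracket_fieldF_zero_fieldF_succ, show 0 + (a' + 1) - 1 = a' by omega]
    congr 1
    push_cast; ring
  · rw [bracket_swap, bracket_fieldF_zero_fieldF_succ, ← neg_smul,
      show a + 1 + 0 - 1 = a by omega, add_comm b]
    congr 1
    push_cast; ring
  · rw [bracket_fieldF_succ_fieldF_succ, show a + 1 + (a' + 1) - 1 = a + a' + 1 by omega]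
    congr 1

lemma bracket_fieldF_succ_fieldΘ (a b m ν : ℕ) :
    bracket (fieldF (a + 1) b) (fieldΘ m ν) =
      (2 * (m * (b + 1) - (a + 1) * ν) : ℤ) • fieldΘ (a + m) (b + ν) := by
  simp only [fieldF, fieldΘ, bracket_smul_smul, bracket_eulerComb_rotYZ, applyVF_mul,
    applyVF_pow_of_eq_mul (applyVF_eulerComb_X_zero _ _),
    applyVF_pow_of_eq_mul (applyVF_eulerComb_rho _ _),
    applyVF_pow_of_eq_mul applyVF_rotYZ_X_zero, applyVF_pow_of_eq_mul applyVF_rotYZ_rho]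
  simp only [eulerComb, eulerX]
  push_cast
  module

lemma bracket_fieldF_zero_fieldΘ (b m ν : ℕ) :
    bracket (fieldF 0 b) (fieldΘ m ν) = (2 * m * (b + 1) : ℤ) • fieldΘ (m - 1) (b + ν) := by
  rcases m with _ | m <;>
    simp only [fieldF, fieldΘ, bracket_smul_smul, bracket_partialX_rotYZ, applyVF_mul,
      applyVF_natCast, applyVF_ofNat, applyVF_add, pow_zero, one_mul,
      applyVF_partialX_X_zero_pow_succ, applyVF_pow_of_eq_mul applyVF_partialX_rho,
      applyVF_pow_of_eq_mul applyVF_rotYZ_rho] <;>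
    push_cast <;>
    module

lemma bracket_fieldF_fieldΘ (a b m ν : ℕ) :
    bracket (fieldF a b) (fieldΘ m ν) =
      (2 * (m * (b + 1) - a * ν) : ℤ) • fieldΘ (a + m - 1) (b + ν) := by
  rcases a with _ | a
  · rw [bracket_fieldF_zero_fieldΘ, zero_add]
    congr 1
    push_cast; ring
  · rw [bracket_fieldF_succ_fieldΘ, show a + 1 + m - 1 = a + m by omega]
    congr 1

lemma bracket_fieldΘ_fieldΘ (m ν m' ν' : ℕ) : bracket (fieldΘ m ν) (fieldΘ m' ν') = 0 := by
  simp only [fieldΘ, bracket_smul_smul, bracket_self, applyVF_mul,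
    applyVF_pow_of_eq_mul applyVF_rotYZ_X_zero, applyVF_pow_of_eq_mul applyVF_rotYZ_rho]
  module

lemma fieldF_eq_two_smul_Fvf (a b : ℕ) :
    fieldF a b = (2 : ℝ) • Fvf ((a : ℤ) - 1) (a - 1 + b) := by
  have half : (C 2⁻¹ : Poly3) * 2 = 1 := by rw [← map_ofNat C 2, ← map_mul]; norm_num
  funext i
  rcases a with _ | a <;> fin_cases i <;>
    simp [Fvf, fieldF, eulerComb, eulerX, eulerYZ, partialX, rho, smul_eq_C_mul, div_eq_mul_inv,
      map_ofNat C]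
  · ring
  · ring
  · linear_combination (a + 1 : Poly3) * X 0 ^ a * X 1 * (X 1 ^ 2 + X 2 ^ 2) ^ b * half
  · linear_combination (a + 1 : Poly3) * X 0 ^ a * X 2 * (X 1 ^ 2 + X 2 ^ 2) ^ b * half

lemma Tvf_eq_fieldΘ (m ν : ℕ) : Tvf m (m + ν) = fieldΘ m ν := by
  funext i
  fin_cases i <;> simp [Tvf, fieldΘ, rotYZ, rho]

/-- The condition `2 ≤ a + 2 * b` excludes exactly `fieldF 0 0 = 2 F^{-1}_{-1}` and
`fieldF 1 0 = 2 F^0_0`. -/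
def generators : Set VF3 :=
  {v | (∃ a b : ℕ, 2 ≤ a + 2 * b ∧ v = fieldF a b) ∨ ∃ m ν : ℕ, v = fieldΘ m ν}

lemma fieldF_mem_span_Lset {a b : ℕ} (hab : 2 ≤ a + 2 * b) :
    fieldF a b ∈ Submodule.span ℝ Lset := by
  rw [fieldF_eq_two_smul_Fvf]
  refine Submodule.smul_mem _ _ (Submodule.subset_span ?_)
  by_cases hk : 1 ≤ (a : ℤ) - 1 + b
  · exact Or.inr (Or.inr (Or.inl ⟨_, _, hk, by omega, by omega, rfl⟩))
  · obtain ⟨rfl, rfl⟩ : a = 0 ∧ b = 1 := by omega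
    exact Or.inr (Or.inl (by norm_num))

lemma fieldΘ_mem_span_Lset (m ν : ℕ) : fieldΘ m ν ∈ Submodule.span ℝ Lset := by
  rw [← Tvf_eq_fieldΘ]
  refine Submodule.subset_span ?_
  by_cases hn : 1 ≤ (m : ℤ) + ν
  · exact Or.inr (Or.inr (Or.inr ⟨_, _, hn, by omega, by omega, rfl⟩))
  · obtain ⟨rfl, rfl⟩ : m = 0 ∧ ν = 0 := by omega
    exact Or.inl rfl

lemma Fvf_mem_span_generators {l k : ℤ} (hl : -1 ≤ l) (hlk : l ≤ k) (hkl : 1 ≤ 2 * k - l) :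
    Fvf l k ∈ Submodule.span ℝ generators := by
  obtain ⟨a, b, rfl, rfl⟩ : ∃ a b : ℕ, l = a - 1 ∧ k = a - 1 + b :=
    ⟨(l + 1).toNat, (k - l).toNat, by omega, by omega⟩
  have hF : fieldF a b ∈ generators := Or.inl ⟨a, b, by omega, rfl⟩
  rw [show Fvf (a - 1) (a - 1 + b) = (2 : ℝ)⁻¹ • fieldF a b by
    rw [fieldF_eq_two_smul_Fvf, smul_smul]; norm_num]
  exact Submodule.smul_mem _ _ (Submodule.subset_span hF)

lemma Tvf_mem_span_generators {m n : ℤ} (hm : 0 ≤ m) (hmn : m ≤ n) :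
    Tvf m n ∈ Submodule.span ℝ generators := by
  lift m to ℕ using hm
  obtain ⟨ν, rfl⟩ : ∃ ν : ℕ, n = m + ν := ⟨(n - m).toNat, by omega⟩
  exact Submodule.subset_span (Or.inr ⟨m, ν, Tvf_eq_fieldΘ m ν⟩)

lemma span_generators_eq_span_Lset : Submodule.span ℝ generators = Submodule.span ℝ Lset := by
  apply le_antisymm <;> rw [Submodule.span_le]
  · rintro v (⟨a, b, hab, rfl⟩ | ⟨m, ν, rfl⟩)
    · exact fieldF_mem_span_Lset hab
    · exact fieldΘ_mem_span_Lset m ν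
  · rintro v (rfl | rfl | ⟨l, k, hk, hl, hlk, rfl⟩ | ⟨m, n, -, hm, hmn, rfl⟩)
    · exact Tvf_mem_span_generators le_rfl le_rfl
    · exact Fvf_mem_span_generators le_rfl (by norm_num) (by norm_num)
    · exact Fvf_mem_span_generators hl hlk (by omega)
    · exact Tvf_mem_span_generators hm hmn

lemma bracket_mem_span_generators :
    ∀ v ∈ generators, ∀ w ∈ generators, bracket v w ∈ Submodule.span ℝ generators := by
  intro v hv w hw
  have hF {a b : ℕ} (hab : 2 ≤ a + 2 * b) : fieldF a b ∈ Submodule.span ℝ generators :=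
    Submodule.subset_span (Or.inl ⟨a, b, hab, rfl⟩)
  have hΘ (m ν : ℕ) : fieldΘ m ν ∈ Submodule.span ℝ generators :=
    Submodule.subset_span (Or.inr ⟨m, ν, rfl⟩)
  rcases hv with ⟨a, b, hab, rfl⟩ | ⟨m, ν, rfl⟩ <;>
    rcases hw with ⟨a', b', hab', rfl⟩ | ⟨m', ν', rfl⟩
  · rw [bracket_fieldF_fieldF]; exact zsmul_mem (hF (by omega)) _
  · rw [bracket_fieldF_fieldΘ]; exact zsmul_mem (hΘ _ _) _
  · rw [bracket_swap, bracket_fieldF_fieldΘ]; exact neg_mem (zsmul_mem (hΘ _ _) _)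
  · rw [bracket_fieldΘ_fieldΘ]; exact zero_mem _

/-- the vector space `L` spanned by `Θ^0_0`, `F^{−1}_0`,
`{F^l_k : k ≥ 1, −1 ≤ l ≤ k}` and `{Θ^m_n : n ≥ 1, 0 ≤ m ≤ n}` is closed under the Lie
bracket of vector fields, hence is a Lie algebra. -/
theorem Lset_span_closed_under_bracket :
    ∀ v ∈ Submodule.span ℝ Lset, ∀ w ∈ Submodule.span ℝ Lset,
      bracket v w ∈ Submodule.span ℝ Lset := by
  rw [← span_generators_eq_span_Lset]
  exact bracket_mem_span_of_forall_mem bracket_mem_span_generators
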